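/- For β > 1/3, the function m_β(k)² = (1+βk²)·tanh(k)/k is strictly increasing on (0,∞). -/

import Mathlib

open Real

private lemma nonneg_of_hasDerivAt (F F' : ℝ → ℝ) (hd : ∀ x, HasDerivAt F (F' x) x)
    (h0 : F 0 = 0) (hF' : ∀ x, 0 ≤ x → 0 ≤ F' x) : ∀ x, 0 ≤ x → 0 ≤ F x := by
  intro x hx
  have hmono : MonotoneOn F (Set.Ici 0) := by
    apply monotoneOn_of_deriv_nonneg (convex_Ici 0)
    · exact fun y _ => (hd y).continuousAt.continuousWithinAt
    · exact fun y _ => (hd y).differentiableAt.differentiableWithinAt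
    · intro y hy
      rw [interior_Ici] at hy
      rw [(hd y).deriv]
      exact hF' y hy.le
  have := hmono (Set.self_mem_Ici) (Set.mem_Ici.2 hx) hx
  linarith [h0 ▸ this]

private lemma sinh_nn {x : ℝ} (hx : 0 ≤ x) : 0 ≤ Real.sinh x := by
  rw [← Real.sinh_zero]; exact Real.sinh_le_sinh.2 hx

private lemma key_ineq : ∀ x : ℝ, 0 ≤ x → (12 - x^2) * Real.sinh x ≤ x^3 + 12*x := by
  set F4 : ℝ → ℝ := fun x => x^2 * Real.sinh x + 8*x * Real.cosh x with hF4
  set F3 : ℝ → ℝ := fun x => 6 + 6*x * Real.sinh x + (x^2 - 6) * Real.cosh x with hF3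
  set F2 : ℝ → ℝ := fun x => 6*x + 2 * Real.sinh x + 4*x * Real.cosh x + (x^2 - 12) * Real.sinh x with hF2
  set F1 : ℝ → ℝ := fun x => 12 + 3*x^2 + 2*x * Real.sinh x - (12 - x^2) * Real.cosh x with hF1
  set F0 : ℝ → ℝ := fun x => x^3 + 12*x - (12 - x^2) * Real.sinh x with hF0
  have d3 : ∀ x, HasDerivAt F3 (F4 x) x := by
    intro x
    have h := ((hasDerivAt_const x (6:ℝ)).add
        (((hasDerivAt_id' (𝕜 := ℝ) (x := x)).const_mul 6).mul (Real.hasDerivAt_sinh x))).add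
        (((hasDerivAt_pow 2 x).sub (hasDerivAt_const x 6)).mul (Real.hasDerivAt_cosh x))
    refine h.congr_deriv ?_
    simp only [hF4]; push_cast [Pi.add_apply, Pi.sub_apply, Pi.mul_apply, Pi.div_apply]; ring
  have d2 : ∀ x, HasDerivAt F2 (F3 x) x := by
    intro x
    have h := ((((hasDerivAt_id' (𝕜 := ℝ) (x := x)).const_mul 6).add
        ((Real.hasDerivAt_sinh x).const_mul 2)).add
        (((hasDerivAt_id' (𝕜 := ℝ) (x := x)).const_mul 4).mul (Real.hasDerivAt_cosh x))).add
        (((hasDerivAt_pow 2 x).sub (hasDerivAt_const x 12)).mul (Real.hasDerivAt_sinh x))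
    refine h.congr_deriv ?_
    simp only [hF3]; push_cast [Pi.add_apply, Pi.sub_apply, Pi.mul_apply, Pi.div_apply]; ring
  have d1 : ∀ x, HasDerivAt F1 (F2 x) x := by
    intro x
    have h := (((hasDerivAt_const x (12:ℝ)).add ((hasDerivAt_pow 2 x).const_mul 3)).add
        (((hasDerivAt_id' (𝕜 := ℝ) (x := x)).const_mul 2).mul (Real.hasDerivAt_sinh x))).sub
        (((hasDerivAt_const x 12).sub (hasDerivAt_pow 2 x)).mul (Real.hasDerivAt_cosh x))
    refine h.congr_deriv ?_
    simp only [hF2]; push_cast [Pi.add_apply, Pi.sub_apply, Pi.mul_apply, Pi.div_apply]; ring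
  have d0 : ∀ x, HasDerivAt F0 (F1 x) x := by
    intro x
    have h := (((hasDerivAt_pow 3 x).add ((hasDerivAt_id' (𝕜 := ℝ) (x := x)).const_mul 12)).sub
        (((hasDerivAt_const x 12).sub (hasDerivAt_pow 2 x)).mul (Real.hasDerivAt_sinh x)))
    refine h.congr_deriv ?_
    simp only [hF1]; push_cast [Pi.add_apply, Pi.sub_apply, Pi.mul_apply, Pi.div_apply]; ring
  have h4 : ∀ x, 0 ≤ x → 0 ≤ F4 x := by
    intro x hx
    simp only [hF4]
    have hs := sinh_nn hx
    have hc := (Real.cosh_pos x).le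
    have h1 : 0 ≤ x^2 * Real.sinh x := mul_nonneg (sq_nonneg x) hs
    have h2 : 0 ≤ 8*x * Real.cosh x := mul_nonneg (by linarith) hc
    linarith
  have h3 : ∀ x, 0 ≤ x → 0 ≤ F3 x :=
    nonneg_of_hasDerivAt F3 F4 d3 (by simp [hF3]) h4
  have h2 : ∀ x, 0 ≤ x → 0 ≤ F2 x :=
    nonneg_of_hasDerivAt F2 F3 d2 (by simp [hF2]) h3
  have h1 : ∀ x, 0 ≤ x → 0 ≤ F1 x :=
    nonneg_of_hasDerivAt F1 F2 d1 (by simp [hF1]) h2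
  have h0 : ∀ x, 0 ≤ x → 0 ≤ F0 x :=
    nonneg_of_hasDerivAt F0 F1 d0 (by simp [hF0]) h1
  intro x hx
  have := h0 x hx
  simp only [hF0] at this
  linarith

/-- For `β > 1/3`, the function `k ↦ (1+βk²)·tanh(k)/k` is strictly
increasing on `(0,∞)`. -/
theorem symbol_squared_strictMono_strong_surface_tension (β : ℝ) (hβ : 1/3 < β) :
    StrictMonoOn (fun k : ℝ => (1 + β * k^2) * Real.tanh k / k) (Set.Ioi (0:ℝ)) := by
  have hfun : (fun k : ℝ => (1 + β * k^2) * Real.tanh k / k)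
      = fun k : ℝ => (1 + β * k^2) * Real.sinh k / (k * Real.cosh k) := by
    funext k
    rw [Real.tanh_eq_sinh_div_cosh]
    have hc := (Real.cosh_pos k).ne'
    field_simp
  rw [hfun]
  have hder : ∀ k : ℝ, 0 < k → HasDerivAt (fun k : ℝ => (1 + β * k^2) * Real.sinh k / (k * Real.cosh k))
      (((β * (2*k) * Real.sinh k + (1 + β * k^2) * Real.cosh k) * (k * Real.cosh k)
        - (1 + β * k^2) * Real.sinh k * (1 * Real.cosh k + k * Real.sinh k)) / (k * Real.cosh k)^2) k := by
    intro k hk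
    have hnum := ((hasDerivAt_const k (1:ℝ)).add ((hasDerivAt_pow 2 k).const_mul β)).mul
      (Real.hasDerivAt_sinh k)
    have hden := (hasDerivAt_id' (𝕜 := ℝ) (x := k)).mul (Real.hasDerivAt_cosh k)
    have hne : k * Real.cosh k ≠ 0 := by positivity
    have h := hnum.div hden hne
    refine h.congr_deriv ?_
    push_cast [Pi.add_apply, Pi.sub_apply, Pi.mul_apply, Pi.div_apply]; ring
  apply strictMonoOn_of_deriv_pos (convex_Ioi 0)
  · intro k hk
    exact (hder k hk).continuousAt.continuousWithinAt
  · intro k hk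
    rw [interior_Ioi] at hk
    have hk' : (0:ℝ) < k := hk
    rw [(hder k hk').deriv]
    have hc := Real.cosh_pos k
    have hs : 0 < Real.sinh k := by
      have := sinh_nn hk'.le
      rcases this.lt_or_eq with h | h
      · exact h
      · exfalso
        have : Real.sinh k = 0 := h.symm
        rw [Real.sinh_eq_zero] at this
        linarith
    apply div_pos
    · set s := Real.sinh k with hsdef
      set c := Real.cosh k with hcdef
      have hkey := key_ineq (2*k) (by linarith)
      rw [Real.sinh_two_mul] at hkey
      have hcsq : c^2 = 1 + s^2 := Real.cosh_sq' k
      have h1 : (3 - k^2) * (s * c) ≤ k^3 + 3*k := by nlinarith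
      have hA : 0 < k^2 * (s*c) + k^3 :=
        add_pos (mul_pos (pow_pos hk' 2) (mul_pos hs hc)) (pow_pos hk' 3)
      have hz : c^2 - 1 - s^2 = 0 := by rw [hcsq]; ring
      have hNform : (β * (2*k) * s + (1 + β * k^2) * c) * (k * c)
          - (1 + β * k^2) * s * (1 * c + k * s)
          = β * (k^2*(s*c) + k^3) + (k - s*c) + (1 + β*k^2)*k*(c^2 - 1 - s^2) := by ring
      rw [hNform, hz, mul_zero]
      nlinarith [mul_pos hA (show (0:ℝ) < β - 1/3 by linarith)]
    · have : (0:ℝ) < k * Real.cosh k := by positivity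
      positivity
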